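/- arXiv:math/0310303 — 3 statements merged into one kernel-verified Lean document; each statement's English description precedes it below -/
import Mathlib

section
/- Let T be a unitrivalent tree. Then T is simple if and only if every maximal-length path of T contains every trivalent vertex of T. (This is the characterization of simple trees used in the proof that every Whitney tower can be replaced by a simple Whitney tower.) -/
open scoped Classical

/-- A unitrivalent tree: a finite tree (connected acyclic simple graph) with at least
two vertices in which every vertex has degree 1 or 3. -/
def IsUnitrivalentTree {V : Type*} [Fintype V] (G : SimpleGraph V) : Prop :=
  G.IsTree ∧ 2 ≤ Fintype.card V ∧ ∀ v : V, G.degree v = 1 ∨ G.degree v = 3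

/-- A unitrivalent tree is simple if it contains a path passing through all of its
trivalent vertices. -/
def IsSimpleUnitrivalent {V : Type*} [Fintype V] (G : SimpleGraph V) : Prop :=
  ∃ (u v : V) (p : G.Walk u v), p.IsPath ∧ ∀ w : V, G.degree w = 3 → w ∈ p.support

set_option linter.unusedSectionVars false
set_option linter.unusedVariables false

section Auxx
variable {V : Type*} [Fintype V] {G : SimpleGraph V}

/-- In an acyclic graph, a vertex has at most one neighbor on a path starting at it. -/
lemma stw_nbr_eq (hA : G.IsAcyclic) {u v x y : V} {p : G.Walk u v} (hp : p.IsPath)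
    (hx : G.Adj u x) (hxs : x ∈ p.support) (hy : G.Adj u y) (hys : y ∈ p.support) : x = y := by
  have huniq := SimpleGraph.isAcyclic_iff_path_unique.mp hA
  have key : ∀ (z : V) (hz : G.Adj u z) (hzs : z ∈ p.support), p.support.tail.head? = some z := by
    intro z hz hzs
    have h1 : p.takeUntil z hzs = (SimpleGraph.Path.singleton hz).val := by
      have := huniq ⟨p.takeUntil z hzs, hp.takeUntil hzs⟩ (SimpleGraph.Path.singleton hz)
      exact congrArg Subtype.val this
    have h2 := p.take_spec hzs
    rw [h1] at h2
    have h3 := congrArg SimpleGraph.Walk.support h2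
    rw [SimpleGraph.Walk.support_append] at h3
    have h4 : (SimpleGraph.Path.singleton hz).val.support = [u, z] := rfl
    rw [h4] at h3
    rw [← h3]
    simp
    rw [SimpleGraph.Walk.support_eq_cons]; rfl
  have := (key x hx hxs).symm.trans (key y hy hys)
  simpa using this

lemma stw_fresh_nbr (hA : G.IsAcyclic) {u v : V} {p : G.Walk u v} (hp : p.IsPath)
    (hdeg : G.degree u = 3) : ∃ x, G.Adj x u ∧ x ∉ p.support := by
  classical
  have htcard : ((G.neighborFinset u).filter (fun z => z ∈ p.support)).card ≤ 1 := by
    apply Finset.card_le_one.mpr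
    intro a ha b hb
    rw [Finset.mem_filter, SimpleGraph.mem_neighborFinset] at ha hb
    exact stw_nbr_eq hA hp ha.1 ha.2 hb.1 hb.2
  have hscard : (G.neighborFinset u).card = 3 := by
    rw [SimpleGraph.card_neighborFinset_eq_degree]; exact hdeg
  have : ((G.neighborFinset u).filter (fun z => z ∉ p.support)).Nonempty := by
    rw [← Finset.card_pos]
    have := Finset.card_filter_add_card_filter_not (s := G.neighborFinset u)
      (p := fun z => z ∈ p.support)
    omega
  obtain ⟨x, hx⟩ := this
  rw [Finset.mem_filter, SimpleGraph.mem_neighborFinset] at hx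
  exact ⟨x, hx.1.symm, hx.2⟩

lemma stw_deg_one_endpoint : ∀ {u v w : V} (p : G.Walk u v), p.IsPath →
    w ∈ p.support → G.degree w = 1 → w = u ∨ w = v := by
  intro u v w p
  induction p with
  | nil => intro _ hw _; simp at hw; exact Or.inl hw
  | @cons u u' v h q ih =>
    intro hpp hw hdeg
    rw [SimpleGraph.Walk.support_cons] at hw
    rcases List.mem_cons.mp hw with h1 | h2
    · exact Or.inl h1
    have hq : q.IsPath := hpp.of_cons
    rcases ih hq h2 hdeg with h3 | h4
    · subst h3
      cases q with
      | nil => exact Or.inr rfl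
      | @cons _ u'' _ h2' r =>
        exfalso
        have hu : u ∈ G.neighborFinset w := by
          rw [SimpleGraph.mem_neighborFinset]; exact h.symm
        have hu'' : u'' ∈ G.neighborFinset w := by
          rw [SimpleGraph.mem_neighborFinset]; exact h2'
        have hne : u ≠ u'' := by
          rintro rfl
          rw [SimpleGraph.Walk.cons_isPath_iff] at hpp
          exact hpp.2 (by simp [SimpleGraph.Walk.support_cons])
        have hsub : ({u, u''} : Finset V) ⊆ G.neighborFinset w := by
          intro z hz
          rcases Finset.mem_insert.mp hz with rfl | hz
          · exact hu
          · rw [Finset.mem_singleton.mp hz]; exact hu''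
        have := Finset.card_le_card hsub
        rw [Finset.card_pair hne, SimpleGraph.card_neighborFinset_eq_degree, hdeg] at this
        omega
    · exact Or.inr h4

end Auxx

section Auxx2
variable {V : Type*} [Fintype V] {G : SimpleGraph V}

lemma stw_extend_start (hA : G.IsAcyclic) (hdeg : ∀ w : V, G.degree w = 1 ∨ G.degree w = 3) :
    ∀ (n : ℕ) {u v : V} (p : G.Walk u v), p.IsPath → Fintype.card V - p.length ≤ n →
    ∃ (a : V) (q : G.Walk a v), q.IsPath ∧ p.length ≤ q.length ∧
      (∀ w ∈ p.support, w ∈ q.support) ∧ G.degree a = 1 := by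
  intro n
  induction n with
  | zero =>
    intro u v p hp hn
    have := hp.length_lt
    omega
  | succ n ih =>
    intro u v p hp hn
    rcases hdeg u with h1 | h3
    · exact ⟨u, p, hp, le_refl _, fun w hw => hw, h1⟩
    · obtain ⟨x, hx, hxs⟩ := stw_fresh_nbr hA hp h3
      have hp' : (SimpleGraph.Walk.cons hx p).IsPath :=
        (SimpleGraph.Walk.cons_isPath_iff hx p).mpr ⟨hp, hxs⟩
      have hlen : (SimpleGraph.Walk.cons hx p).length = p.length + 1 := rfl
      obtain ⟨a, q, hq, hql, hqs, ha⟩ := ih (SimpleGraph.Walk.cons hx p) hp' (by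
        have := hp'.length_lt
        omega)
      refine ⟨a, q, hq, by omega, fun w hw => hqs w ?_, ha⟩
      rw [SimpleGraph.Walk.support_cons]
      exact List.mem_cons_of_mem _ hw

lemma stw_extend_leaf (hA : G.IsAcyclic) (hdeg : ∀ w : V, G.degree w = 1 ∨ G.degree w = 3)
    {u v : V} (p : G.Walk u v) (hp : p.IsPath) :
    ∃ (a b : V) (q : G.Walk a b), q.IsPath ∧ p.length ≤ q.length ∧
      (∀ w ∈ p.support, w ∈ q.support) ∧ G.degree a = 1 ∧ G.degree b = 1 := by
  obtain ⟨a, q, hq, hql, hqs, ha⟩ := stw_extend_start hA hdeg (Fintype.card V) p hp (by omega)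
  obtain ⟨b, r, hr, hrl, hrs, hb⟩ :=
    stw_extend_start hA hdeg (Fintype.card V) q.reverse hq.reverse (by omega)
  refine ⟨b, a, r, hr, ?_, ?_, hb, ha⟩
  · rw [SimpleGraph.Walk.length_reverse] at hrl; omega
  · intro w hw
    apply hrs
    rw [SimpleGraph.Walk.support_reverse, List.mem_reverse]
    exact hqs w hw

end Auxx2

/-- A unitrivalent tree is simple if and only if every maximal-length path contains
every trivalent vertex. -/
theorem simple_iff_maximal_paths_contain_trivalent {V : Type*} [Fintype V]
    (G : SimpleGraph V) (hG : IsUnitrivalentTree G) :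
    IsSimpleUnitrivalent G ↔
      ∀ (u v : V) (p : G.Walk u v), p.IsPath →
        (∀ (a b : V) (q : G.Walk a b), q.IsPath → q.length ≤ p.length) →
        ∀ w : V, G.degree w = 3 → w ∈ p.support := by
  have hA : G.IsAcyclic := hG.1.IsAcyclic
  have hdeg := hG.2.2
  have hEx : ∀ {u v : V} (p : G.Walk u v), p.IsPath →
      ∃ (a b : V) (q : G.Walk a b), q.IsPath ∧ p.length ≤ q.length ∧
      (∀ w ∈ p.support, w ∈ q.support) ∧ G.degree a = 1 ∧ G.degree b = 1 :=
    fun p hp => stw_extend_leaf hA hdeg p hp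
  have hOneEnd : ∀ {u v w : V} (p : G.Walk u v), p.IsPath →
      w ∈ p.support → G.degree w = 1 → w = u ∨ w = v :=
    fun p hp hw h1 => stw_deg_one_endpoint p hp hw h1
  unfold IsSimpleUnitrivalent
  have hG' := hG
  unfold IsUnitrivalentTree at hG'
  revert hG'
  intro hG'

  classical
  set T : Finset V := Finset.univ.filter (fun w => G.degree w = 3) with hT
  constructor
  · rintro ⟨u0, v0, p0, hp0, hall⟩ u v q hq hmax w hw3
    -- upgrade to a path of length ≥ 1 containing all trivalent vertices
    obtain ⟨a1, b1, p1, hp1, hlen1, hsupp1⟩ :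
        ∃ (a1 b1 : V) (p1 : G.Walk a1 b1), p1.IsPath ∧ 1 ≤ p1.length ∧
          ∀ w : V, G.degree w = 3 → w ∈ p1.support := by
      rcases Nat.lt_or_ge p0.length 1 with hl | hl
      · have h0 : p0.length = 0 := by omega
        have huv : u0 = v0 := SimpleGraph.Walk.eq_of_length_eq_zero h0
        subst huv
        have hnil : p0 = SimpleGraph.Walk.nil := SimpleGraph.Walk.isPath_iff_eq_nil.mp hp0
        have hdpos : 0 < G.degree u0 := by rcases hdeg u0 with h | h <;> omega
        obtain ⟨x, hx⟩ := (G.degree_pos_iff_exists_adj u0).mp hdpos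
        refine ⟨x, u0, SimpleGraph.Walk.cons hx.symm SimpleGraph.Walk.nil, ?_, ?_, ?_⟩
        · exact (SimpleGraph.Walk.cons_isPath_iff _ _).mpr
            ⟨SimpleGraph.Walk.IsPath.nil, by simp [hx.symm.ne]⟩
        · rfl
        · intro w hw
          have := hall w hw
          rw [hnil] at this
          simp at this
          simp [this]
      · exact ⟨u0, v0, p0, hp0, hl, hall⟩
    -- extend to a path with leaf endpoints
    obtain ⟨a, b, p2, hp2, hlen2, hsupp2, hda, hdb⟩ := hEx p1 hp1
    have hab : a ≠ b := by
      rintro rfl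
      have := SimpleGraph.Walk.isPath_iff_eq_nil.mp hp2
      rw [this] at hlen2
      simp only [SimpleGraph.Walk.length_nil] at hlen2
      omega
    -- p2.length ≥ T.card + 1
    have hTsub : T ∪ {a, b} ⊆ p2.support.toFinset := by
      intro z hz
      rw [List.mem_toFinset]
      rcases Finset.mem_union.mp hz with hz | hz
      · rw [hT, Finset.mem_filter] at hz
        exact hsupp2 z (hsupp1 z hz.2)
      · rcases Finset.mem_insert.mp hz with rfl | hz
        · exact p2.start_mem_support
        · rw [Finset.mem_singleton.mp hz]; exact p2.end_mem_support
    have hdisj : Disjoint T ({a, b} : Finset V) := by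
      rw [Finset.disjoint_right]
      intro z hz
      rw [hT, Finset.mem_filter]
      rcases Finset.mem_insert.mp hz with rfl | hz
      · intro h; omega
      · rw [Finset.mem_singleton.mp hz]; intro h; omega
    have hcard2 : p2.support.toFinset.card = p2.length + 1 := by
      rw [List.toFinset_card_of_nodup hp2.support_nodup, SimpleGraph.Walk.length_support]
    have hTlen : T.card + 2 ≤ p2.length + 1 := by
      have h1 := Finset.card_le_card hTsub
      rw [Finset.card_union_of_disjoint hdisj, Finset.card_pair hab, hcard2] at h1
      omega
    -- q is maximal, so q.length ≥ p2.length ≥ T.card + 1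
    have hql : T.card + 1 ≤ q.length := by
      have := hmax a b p2 hp2
      omega
    -- count trivalent vertices on q
    have hqsub : q.support.toFinset \ {u, v} ⊆ T := by
      intro z hz
      rw [Finset.mem_sdiff, List.mem_toFinset] at hz
      rw [hT, Finset.mem_filter]
      refine ⟨Finset.mem_univ z, ?_⟩
      rcases hdeg z with h | h
      · exfalso
        rcases hOneEnd q hq hz.1 h with rfl | rfl
        · exact hz.2 (by simp)
        · exact hz.2 (by simp)
      · exact h
    have hqcard : q.support.toFinset.card = q.length + 1 := by
      rw [List.toFinset_card_of_nodup hq.support_nodup, SimpleGraph.Walk.length_support]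
    have hcard3 : T.card ≤ (q.support.toFinset \ {u, v}).card := by
      have h1 : q.support.toFinset.card ≤ (q.support.toFinset \ {u, v}).card + ({u, v} : Finset V).card :=
        Finset.card_le_card_sdiff_add_card
      have h2 : ({u, v} : Finset V).card ≤ 2 := Finset.card_insert_le _ _ |>.trans (by simp)
      omega
    have hEq : q.support.toFinset \ {u, v} = T :=
      Finset.eq_of_subset_of_card_le hqsub hcard3
    have hwT : w ∈ T := by rw [hT, Finset.mem_filter]; exact ⟨Finset.mem_univ w, hw3⟩
    rw [← hEq, Finset.mem_sdiff, List.mem_toFinset] at hwT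
    exact hwT.1
  · intro H
    have hne : Nonempty V := by
      have := hG'.2.1
      rw [← Fintype.card_pos_iff]
      omega
    obtain ⟨v0⟩ := hne
    set P : ℕ → Prop := fun n => ∃ (u v : V) (p : G.Walk u v), p.IsPath ∧ p.length = n with hP
    have hP0 : P 0 := ⟨v0, v0, SimpleGraph.Walk.nil, SimpleGraph.Walk.IsPath.nil, rfl⟩
    have hPN : P (Nat.findGreatest P (Fintype.card V)) :=
      Nat.findGreatest_spec (Nat.zero_le _) hP0
    obtain ⟨u, v, p, hp, hplen⟩ := hPN
    refine ⟨u, v, p, hp, H u v p hp ?_⟩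
    intro a b q hq
    rw [hplen]
    exact Nat.le_findGreatest (le_of_lt hq.length_lt) ⟨a, b, q, hq, rfl⟩
end

section
/- Let T be a unitrivalent tree that is not simple. Then there exist a maximal-length path P of T and trivalent vertices v0 and v1 of T such that v0 lies on P, v1 does not lie on P, and v0 is adjacent to v1 (so v1 is at distance 1 from a trivalent vertex contained in a maximal-length chain of edges not containing v1). -/
open scoped Classical

namespace SimpleGraph

variable {V : Type*} {G : SimpleGraph V}

lemma one_lt_degree_of_adj_of_adj {x a b : V} [Fintype (G.neighborSet x)]
    (ha : G.Adj x a) (hb : G.Adj x b) (hab : a ≠ b) : 1 < G.degree x := by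
  rw [← card_neighborFinset_eq_degree]
  exact Finset.one_lt_card.2 ⟨a, by simpa using ha, b, by simpa using hb, hab⟩

namespace Walk

lemma exists_adj_mem_support_of_not_nil {u v x : V} {p : G.Walk u v} (hnil : ¬ p.Nil)
    (hx : x ∈ p.support) : ∃ z ∈ p.support, G.Adj x z := by
  obtain ⟨e, he, hxe⟩ := (mem_support_iff_exists_mem_edges_of_not_nil hnil).1 hx
  obtain ⟨z, rfl⟩ := Sym2.mem_iff_exists.1 hxe
  exact ⟨z, p.snd_mem_support_of_mem_edges he, p.adj_of_mem_edges he⟩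

/-- The outer endpoint of the edge through which the path first enters `S` is its start or an
inner vertex of the path, so it has two distinct neighbours. -/
lemma IsPath.exists_adj_one_lt_degree [G.LocallyFinite] {S : Set V} {w u : V} {q : G.Walk w u}
    (hq : q.IsPath) (hw : w ∉ S) (hu : u ∈ S) (hdw : 1 < G.degree w) :
    ∃ x ∈ S, ∃ y ∉ S, G.Adj x y ∧ 1 < G.degree y := by
  induction q with
  | nil => exact absurd hu hw
  | @cons w m u hwm q ih =>
    rw [cons_isPath_iff] at hq
    by_cases hm : m ∈ S
    · exact ⟨m, hm, w, hw, hwm.symm, hdw⟩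
    · refine ih hq.1 hm hu ?_
      cases q with
      | nil => exact absurd hu hm
      | cons hmn r => exact one_lt_degree_of_adj_of_adj hwm.symm hmn fun h => hq.2 (by simp [h])

end Walk

end SimpleGraph

open SimpleGraph in
/-- If a unitrivalent tree is not simple, then there is a maximal-length path `p` and
trivalent vertices `v₀` on `p` and `v₁` off `p` with `v₀` adjacent to `v₁`:
a trivalent vertex at distance 1 from a trivalent vertex contained in a maximal-length
chain of edges not containing it. -/
theorem not_simple_trivalent_off_maximal_path {V : Type*} [Fintype V]
    (G : SimpleGraph V) (hG : IsUnitrivalentTree G) (hns : ¬ IsSimpleUnitrivalent G) :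
    ∃ (u v : V) (p : G.Walk u v), p.IsPath ∧
      (∀ (a b : V) (q : G.Walk a b), q.IsPath → q.length ≤ p.length) ∧
      ∃ v₀ v₁ : V, G.degree v₀ = 3 ∧ G.degree v₁ = 3 ∧
        v₀ ∈ p.support ∧ v₁ ∉ p.support ∧ G.Adj v₀ v₁ := by
  obtain ⟨htree, -, hdeg⟩ := hG
  have : Nonempty V := htree.connected.nonempty
  have eq_three_of_one_lt (x : V) (hx : 1 < G.degree x) : G.degree x = 3 :=
    (hdeg x).resolve_left hx.ne'
  obtain ⟨u, v, p, hp, hmax⟩ := Walk.exists_isPath_forall_isPath_length_le_length G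
  refine ⟨u, v, p, hp, hmax, ?_⟩
  obtain ⟨w, hw, hwp⟩ : ∃ w, G.degree w = 3 ∧ w ∉ p.support := by
    by_contra! h
    exact hns ⟨u, v, p, hp, h⟩
  obtain ⟨x, hxp, y, hyp, hxy, hy⟩ :=
    ((htree.connected w u).some.toPath).2.exists_adj_one_lt_degree
      (S := {x | x ∈ p.support}) hwp p.start_mem_support (by omega)
  have hnil : ¬ p.Nil :=
    Walk.not_nil_iff_lt_length.2 <| (hmax x y hxy.toWalk hxy.isPath_toWalk).trans_lt' one_pos
  obtain ⟨z, hzp, hxz⟩ := p.exists_adj_mem_support_of_not_nil hnil hxp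
  have hx := one_lt_degree_of_adj_of_adj hxy hxz (ne_of_mem_of_not_mem hzp hyp).symm
  exact ⟨x, y, eq_three_of_one_lt x hx, eq_three_of_one_lt y hy, hxp, hyp, hxy⟩
end

section
/- Let k ≥ 1 be an integer and let T be a simple unitrivalent tree of Vassiliev degree at least 2k. Then T has a univalent vertex ℓ whose unique neighbor v is trivalent, such that each of the two connected components of T − v that do not contain ℓ contains at least k − 1 trivalent vertices of T. (This is the existence of a preferred univalent vertex whose adjacent trivalent vertex is at least k trivalent vertices away from both ends of the simple tree.) -/
open scoped Classical

section Aux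

open SimpleGraph Walk

variable {V : Type*} {G : SimpleGraph V}

private lemma not_pair_infix_cons_self {α : Type*} {v c : α} {t : List α} (h : (v :: t).Nodup)
    (hi : [c, v] <:+: v :: t) : False := by
  rw [List.infix_cons_iff] at hi
  rcases hi with hi | hi
  · rcases List.cons_prefix_cons.mp hi with ⟨rfl, hp⟩
    have : c ∈ t := hp.subset (by simp)
    simp at h
    exact h.1 this
  · have : v ∈ t := hi.subset (by simp : v ∈ [c, v])
    simp at h
    exact h.1 this

private lemma pair_infix_unique {α : Type*} {v : α} : ∀ {s : List α}, s.Nodup → ∀ {a b : α},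
    [a, v] <:+: s → [b, v] <:+: s → a = b := by
  intro s
  induction s with
  | nil => intro _ a b h1 _; exact absurd h1.length_le (by simp)
  | cons x t ih =>
    intro hs a b h1 h2
    rw [List.infix_cons_iff] at h1 h2
    rcases h1 with h1 | h1 <;> rcases h2 with h2 | h2
    · rcases List.cons_prefix_cons.mp h1 with ⟨rfl, hp1⟩
      rcases List.cons_prefix_cons.mp h2 with ⟨rfl, _⟩
      rfl
    · rcases List.cons_prefix_cons.mp h1 with ⟨rfl, hp1⟩
      obtain ⟨t', rfl⟩ := hp1
      exact absurd h2 (fun h => not_pair_infix_cons_self hs.of_cons (by simpa using h))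
    · rcases List.cons_prefix_cons.mp h2 with ⟨rfl, hp2⟩
      obtain ⟨t', rfl⟩ := hp2
      exact absurd h1 (fun h => not_pair_infix_cons_self hs.of_cons (by simpa using h))
    · exact ih hs.of_cons h1 h2

private lemma pair_infix_unique' {α : Type*} {v : α} {s : List α} (hs : s.Nodup) {a b : α}
    (h1 : [v, a] <:+: s) (h2 : [v, b] <:+: s) : a = b :=
  pair_infix_unique (v := v) (List.nodup_reverse.mpr hs)
    (by simpa using h1.reverse) (by simpa using h2.reverse)

private lemma support_takeUntil_prefix [DecidableEq V] {u v w : V} (p : G.Walk v w)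
    (h : u ∈ p.support) : (p.takeUntil u h).support <+: p.support := by
  refine ⟨(p.dropUntil u h).support.tail, ?_⟩
  rw [← support_append, take_spec]

private lemma support_eq_dropLast_concat {u v : V} (p : G.Walk u v) :
    p.support = p.support.dropLast ++ [v] := by
  conv_lhs => rw [← List.dropLast_append_getLast (p.support_ne_nil)]
  rw [p.getLast_support]

private lemma support_dropUntil_suffix [DecidableEq V] {u v w : V} (p : G.Walk v w)
    (h : u ∈ p.support) : (p.dropUntil u h).support <:+ p.support := by
  refine ⟨(p.takeUntil u h).support.dropLast, ?_⟩
  conv_rhs => rw [← take_spec p h]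
  rw [support_append, support_eq_dropLast_concat (p.takeUntil u h),
    support_eq_cons (p.dropUntil u h)]
  simp
  conv_rhs => rw [support_eq_dropLast_concat (p.takeUntil u h)]
  rw [List.append_assoc]
  conv_lhs => rw [support_eq_cons (p.dropUntil u h)]
  rfl

private lemma adj_infix [DecidableEq V] (hac : G.IsAcyclic) {u w : V} {p : G.Walk u w}
    (hp : p.IsPath) {x y : V} (hx : x ∈ p.support) (hy : y ∈ p.support) (hxy : G.Adj x y) :
    [x, y] <:+: p.support ∨ [y, x] <:+: p.support := by
  by_cases hy' : y ∈ (p.takeUntil x hx).support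
  · right
    set seg := (p.takeUntil x hx).dropUntil y hy' with hseg
    have hsegp : seg.IsPath := (hp.takeUntil hx).dropUntil hy'
    have hequ : seg = (SimpleGraph.Path.singleton hxy.symm : G.Walk y x) :=
      congrArg Subtype.val (hac.path_unique ⟨seg, hsegp⟩ (SimpleGraph.Path.singleton hxy.symm))
    have h1 : seg.support <:+ (p.takeUntil x hx).support := support_dropUntil_suffix _ hy'
    have h2 : (p.takeUntil x hx).support <+: p.support := support_takeUntil_prefix p hx
    have h3 : seg.support = [y, x] := by rw [hequ]; simp [SimpleGraph.Path.singleton]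
    rw [h3] at h1
    exact h1.isInfix.trans h2.isInfix
  · left
    have hy'' : y ∈ (p.dropUntil x hx).support := by
      have := hy
      rw [← take_spec p hx, mem_support_append_iff] at this
      tauto
    set seg := (p.dropUntil x hx).takeUntil y hy'' with hseg
    have hsegp : seg.IsPath := (hp.dropUntil hx).takeUntil hy''
    have hequ : seg = (SimpleGraph.Path.singleton hxy : G.Walk x y) :=
      congrArg Subtype.val (hac.path_unique ⟨seg, hsegp⟩ (SimpleGraph.Path.singleton hxy))
    have h1 : seg.support <+: (p.dropUntil x hx).support := support_takeUntil_prefix _ hy''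
    have h2 : (p.dropUntil x hx).support <:+ p.support := support_dropUntil_suffix p hx
    have h3 : seg.support = [x, y] := by rw [hequ]; simp [SimpleGraph.Path.singleton]
    rw [h3] at h1
    exact h1.isInfix.trans h2.isInfix

private lemma reach_induce (G : SimpleGraph V) (S : Set V) {x y : V} (w : G.Walk x y)
    (hw : ∀ z ∈ w.support, z ∈ S) :
    (G.induce S).Reachable ⟨x, hw x w.start_mem_support⟩ ⟨y, hw y w.end_mem_support⟩ := by
  induction w with
  | nil => rfl
  | cons h q ih =>
    refine SimpleGraph.Adj.reachable ?_ |>.trans (ih (fun z hz => hw z ?_))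
    · exact h
    · simp [hz]

/-- Every vertex in the tail of the support of a path starting at `v` is connected, inside
`G - v`, to a fixed neighbour `b` of `v`. -/
private lemma side [DecidableEq V] {v w : V} (q : G.Walk v w) (hq : q.IsPath)
    (htail : q.support.tail ≠ []) :
    ∃ b, G.Adj v b ∧ b ∈ q.support.tail ∧ ∀ x ∈ q.support.tail, ∃ (hx : x ≠ v) (hb : b ≠ v),
      (G.induce {y : V | y ≠ v}).Reachable ⟨x, hx⟩ ⟨b, hb⟩ := by
  cases q with
  | nil => simp at htail
  | @cons _ b _ h t =>
    have hsupp : (Walk.cons h t).support.tail = t.support := by simp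
    rw [hsupp]
    rw [Walk.cons_isPath_iff] at hq
    obtain ⟨ht, hvns⟩ := hq
    refine ⟨b, h, t.start_mem_support, fun x hx => ?_⟩
    have hxv : x ≠ v := fun hxe => hvns (hxe ▸ hx)
    have hbv : b ≠ v := fun hbe => hvns (hbe ▸ t.start_mem_support)
    refine ⟨hxv, hbv, ?_⟩
    have hsub : ∀ z ∈ (t.takeUntil x hx).reverse.support, z ∈ {y : V | y ≠ v} := by
      intro z hz
      have : z ∈ t.support := (t.support_takeUntil_subset hx) (by
        rw [Walk.support_reverse] at hz; exact List.mem_reverse.mp hz)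
      exact fun hzv => hvns (hzv ▸ this)
    exact reach_induce G _ (t.takeUntil x hx).reverse hsub

/-- If `ℓ` has degree 1 and is adjacent to `v`, anything reachable from `ℓ` in `G - v`
equals `ℓ`. -/
private lemma leaf_reach_eq [Fintype V] [DecidableEq V] {ℓ v : V} (hdeg1 : G.degree ℓ = 1)
    (hadj : G.Adj ℓ v) {hℓv : ℓ ≠ v} {z : {y : V // y ∈ {y : V | y ≠ v}}}
    (h : (G.induce {y : V | y ≠ v}).Reachable ⟨ℓ, hℓv⟩ z) : z = ⟨ℓ, hℓv⟩ := by
  obtain ⟨wlk⟩ := h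
  cases wlk with
  | nil => rfl
  | @cons _ y _ hA t =>
    exfalso
    have hGA : G.Adj ℓ (y : V) := hA
    have hyv : (y : V) ≠ v := y.2
    have hcard : (G.neighborFinset ℓ).card = 1 := hdeg1
    obtain ⟨c, hc⟩ := Finset.card_eq_one.mp hcard
    have h1 : v ∈ G.neighborFinset ℓ := by rwa [SimpleGraph.mem_neighborFinset]
    have h2 : (y : V) ∈ G.neighborFinset ℓ := by rwa [SimpleGraph.mem_neighborFinset]
    rw [hc, Finset.mem_singleton] at h1 h2
    exact hyv (h2.trans h1.symm)

end Aux

/-- In a simple unitrivalent tree of Vassiliev degree at least `2k` (`k ≥ 1`) there is a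
univalent vertex `ℓ` whose (unique) neighbor `v` is trivalent such that every connected
component of `T - v` not containing `ℓ` contains at least `k - 1` trivalent vertices of
`T`: a preferred univalent vertex whose adjacent trivalent vertex is at least `k`
trivalent vertices away from both ends of the simple tree. -/
theorem simple_tree_preferred_leaf {V : Type*} [Fintype V] (G : SimpleGraph V)
    (hG : IsUnitrivalentTree G) (hsimple : IsSimpleUnitrivalent G)
    (k d : ℕ) (hk : 1 ≤ k) (hd : Fintype.card V = 2 * d) (hkd : 2 * k ≤ d) :
    ∃ (ℓ v : V) (hne : ℓ ≠ v), G.degree ℓ = 1 ∧ G.degree v = 3 ∧ G.Adj ℓ v ∧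
      ∀ C : (G.induce {x : V | x ≠ v}).ConnectedComponent,
        C ≠ (G.induce {x : V | x ≠ v}).connectedComponentMk ⟨ℓ, hne⟩ →
        k - 1 ≤ (Finset.univ.filter fun w : {x : V // x ∈ {x : V | x ≠ v}} =>
            G.degree (w : V) = 3
              ∧ (G.induce {x : V | x ≠ v}).connectedComponentMk w = C).card := by
  classical
  obtain ⟨hT, hcard2, hdeg⟩ := hG
  obtain ⟨u, w0, p, hp, hcover⟩ := hsimple
  set L := p.support.filter (fun x => G.degree x = 3) with hL
  have hLnodup : L.Nodup := hp.support_nodup.filter _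
  have hLmem : ∀ x, x ∈ L ↔ G.degree x = 3 := by
    intro x
    simp only [hL, List.mem_filter, decide_eq_true_eq]
    exact ⟨fun h => h.2, fun h => ⟨hcover x h, h⟩⟩
  -- counting
  set t := (Finset.univ.filter (fun x : V => G.degree x = 3)).card with ht
  have hLlen : L.length = t := by
    rw [← List.toFinset_card_of_nodup hLnodup]
    congr 1
    ext x
    simp [hLmem x]
  have hedge : G.edgeFinset.card + 1 = 2 * d := by
    rw [← hd]; exact hT.card_edgeFinset
  have hsumdeg : ∑ x : V, G.degree x = 2 * G.edgeFinset.card :=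
    G.sum_degrees_eq_twice_card_edges
  have hsum2 : ∑ x : V, G.degree x = 2 * d + 2 * t := by
    have h1 : ∀ x : V, G.degree x = 1 + if G.degree x = 3 then 2 else 0 := by
      intro x; rcases hdeg x with h | h <;> simp [h]
    calc ∑ x : V, G.degree x = ∑ x : V, (1 + if G.degree x = 3 then 2 else 0) :=
          Finset.sum_congr rfl (fun x _ => h1 x)
      _ = Fintype.card V + 2 * t := by
          rw [Finset.sum_add_distrib, Finset.sum_const, smul_eq_mul, mul_one,
            Finset.sum_ite, Finset.sum_const, Finset.sum_const, ht]
          simp [Finset.card_univ, mul_comm]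
      _ = 2 * d + 2 * t := by rw [hd]
  have htd : t + 1 = d := by omega
  have hklt : k - 1 < L.length := by omega
  set v := L.get ⟨k - 1, hklt⟩ with hv
  have hvL : v ∈ L := L.get_mem _
  have hv3 : G.degree v = 3 := (hLmem v).mp hvL
  have hvsup : v ∈ p.support := by
    have h := hvL
    rw [hL] at h
    exact (List.mem_filter.mp h).1
  -- a univalent neighbour of v
  have hleaf : ∃ ℓ, G.Adj v ℓ ∧ G.degree ℓ = 1 := by
    by_contra hno
    push_neg at hno
    have hall : ∀ n, G.Adj v n → n ∈ p.support := by
      intro n hn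
      rcases hdeg n with h1 | h3
      · exact absurd h1 (hno n hn)
      · exact hcover n h3
    have hcard3 : (G.neighborFinset v).card = 3 := hv3
    obtain ⟨a, b, c, hab, hac, hbc, hN⟩ := Finset.card_eq_three.mp hcard3
    have hAa : G.Adj v a := by
      rw [← SimpleGraph.mem_neighborFinset, hN]; simp
    have hAb : G.Adj v b := by
      rw [← SimpleGraph.mem_neighborFinset, hN]; simp
    have hAc : G.Adj v c := by
      rw [← SimpleGraph.mem_neighborFinset, hN]; simp
    have hnds := hp.support_nodup
    have Ia := adj_infix hT.IsAcyclic hp hvsup (hall a hAa) hAa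
    have Ib := adj_infix hT.IsAcyclic hp hvsup (hall b hAb) hAb
    have Ic := adj_infix hT.IsAcyclic hp hvsup (hall c hAc) hAc
    rcases Ia with ha | ha <;> rcases Ib with hb | hb <;> rcases Ic with hc | hc
    · exact hab (pair_infix_unique' hnds ha hb)
    · exact hab (pair_infix_unique' hnds ha hb)
    · exact hac (pair_infix_unique' hnds ha hc)
    · exact hbc (pair_infix_unique hnds hb hc)
    · exact hbc (pair_infix_unique' hnds hb hc)
    · exact hac (pair_infix_unique hnds ha hc)
    · exact hab (pair_infix_unique hnds ha hb)
    · exact hab (pair_infix_unique hnds ha hb)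
  obtain ⟨ℓ, hadjvℓ, hℓ1⟩ := hleaf
  refine ⟨ℓ, v, hadjvℓ.ne', hℓ1, hv3, hadjvℓ.symm, ?_⟩
  intro C hC
  by_cases hk1 : k = 1
  · simp [hk1]
  have hk2 : 2 ≤ k := by omega
  -- split the path at v
  set q1 := p.takeUntil v hvsup with hq1def
  set q2 := p.dropUntil v hvsup with hq2def
  have hq1path : q1.IsPath := hp.takeUntil hvsup
  have hq2path : q2.IsPath := hp.dropUntil hvsup
  have hsupp : p.support = q1.support ++ q2.support.tail := by
    conv_lhs => rw [← SimpleGraph.Walk.take_spec p hvsup]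
    rw [SimpleGraph.Walk.support_append]
  set init := q1.support.dropLast with hinit
  have hq1supp : q1.support = init ++ [v] := support_eq_dropLast_concat q1
  set A := init.filter (fun x => G.degree x = 3) with hA
  set B2 := (q2.support.tail).filter (fun x => G.degree x = 3) with hB2
  have hLsplit : L = A ++ v :: B2 := by
    rw [hL, hsupp, List.filter_append, hq1supp, List.filter_append]
    have : [v].filter (fun x => G.degree x = 3) = [v] := by simp [hv3]
    rw [this]
    simp
    rfl
  have hidx : A.length < L.length := by rw [hLsplit]; simp
  have hgv : L[A.length]? = some v := by
    rw [hLsplit, List.getElem?_append_right (le_refl _)]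
    simp
  have hgv' : L[k - 1]? = some v := by
    rw [List.getElem?_eq_getElem hklt]
    simp [hv]
  have hAlen : A.length = k - 1 :=
    (List.getElem?_inj hidx hLnodup).mp (hgv.trans hgv'.symm)
  have hB2len : k - 1 ≤ B2.length := by
    have : L.length = A.length + (1 + B2.length) := by rw [hLsplit]; simp; omega
    omega
  have hAnodup : A.Nodup := ((List.dropLast_sublist q1.support).nodup hq1path.support_nodup).filter _
  have hB2nodup : B2.Nodup :=
    ((List.tail_sublist _).nodup hq2path.support_nodup).filter _
  have hAdeg : ∀ x ∈ A, G.degree x = 3 := by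
    intro x hx
    have := (List.mem_filter.mp hx).2
    simpa using this
  have hB2deg : ∀ x ∈ B2, G.degree x = 3 := by
    intro x hx
    have := (List.mem_filter.mp hx).2
    simpa using this
  have hAinit : ∀ x ∈ A, x ∈ init := fun x hx => (List.mem_filter.mp hx).1
  have hB2tail : ∀ x ∈ B2, x ∈ q2.support.tail := fun x hx => (List.mem_filter.mp hx).1
  have hAne : A ≠ [] := by
    intro h
    rw [h] at hAlen
    simp at hAlen
    omega
  have hB2ne : B2 ≠ [] := by
    intro h
    rw [h] at hB2len
    simp at hB2len
    omega
  -- the two sides of v on the path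
  have hrpath : q1.reverse.IsPath := hq1path.reverse
  have hrsupp : q1.reverse.support = v :: init.reverse := by
    rw [SimpleGraph.Walk.support_reverse, hq1supp]
    simp
  have hrtail : q1.reverse.support.tail = init.reverse := by rw [hrsupp]; rfl
  have hinitne : init ≠ [] := by
    intro h
    apply hAne
    rw [hA, h]
    rfl
  have htailr : q1.reverse.support.tail ≠ [] := by
    rw [hrtail]
    simpa using hinitne
  obtain ⟨a, hva, hamem, hareach⟩ := side q1.reverse hrpath htailr
  have htail2 : q2.support.tail ≠ [] := by
    intro h
    apply hB2ne
    rw [hB2, h]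
    rfl
  obtain ⟨b, hvb, hbmem, hbreach⟩ := side q2 hq2path htail2
  have hamem' : a ∈ init := by rw [hrtail] at hamem; exact List.mem_reverse.mp hamem
  have hAmemtail : ∀ x ∈ A, x ∈ q1.reverse.support.tail := by
    intro x hx
    rw [hrtail]
    exact List.mem_reverse.mpr (hAinit x hx)
  -- distinctness of the three neighbours
  have hpnd := hp.support_nodup
  rw [hsupp] at hpnd
  have hdisj := List.disjoint_of_nodup_append hpnd
  have haq1 : a ∈ q1.support := by rw [hq1supp]; exact List.mem_append_left _ hamem'
  have hbq2 : b ∈ q2.support.tail := hbmem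
  have hab : a ≠ b := fun h => hdisj haq1 (h ▸ hbq2)
  obtain ⟨x0, hx0A⟩ := List.exists_mem_of_ne_nil A hAne
  obtain ⟨y0, hy0B⟩ := List.exists_mem_of_ne_nil B2 hB2ne
  have haℓ : a ≠ ℓ := by
    rintro rfl
    obtain ⟨hx0v, hav, hre⟩ := hareach x0 (hAmemtail x0 hx0A)
    have := leaf_reach_eq hℓ1 hadjvℓ.symm (hℓv := hav) hre.symm
    have hx0ℓ : x0 = a := congrArg Subtype.val this
    have := hAdeg x0 hx0A
    rw [hx0ℓ, hℓ1] at this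
    exact absurd this (by norm_num)
  have hbℓ : b ≠ ℓ := by
    rintro rfl
    obtain ⟨hy0v, hbv, hre⟩ := hbreach y0 (hB2tail y0 hy0B)
    have := leaf_reach_eq hℓ1 hadjvℓ.symm (hℓv := hbv) hre.symm
    have hy0ℓ : y0 = b := congrArg Subtype.val this
    have := hB2deg y0 hy0B
    rw [hy0ℓ, hℓ1] at this
    exact absurd this (by norm_num)
  -- the neighbourhood of v
  have hNset : G.neighborFinset v = {a, b, ℓ} := by
    refine (Finset.eq_of_subset_of_card_le ?_ ?_).symm
    · intro x hx
      simp only [Finset.mem_insert, Finset.mem_singleton] at hx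
      rw [SimpleGraph.mem_neighborFinset]
      rcases hx with rfl | rfl | rfl
      · exact hva
      · exact hvb
      · exact hadjvℓ
    · have h3 : (G.neighborFinset v).card = 3 := hv3
      rw [h3]
      rw [Finset.card_insert_of_notMem (by simp [hab, haℓ]),
        Finset.card_insert_of_notMem (by simp [hbℓ]), Finset.card_singleton]
  have hnbr : ∀ n, G.Adj v n → n = a ∨ n = b ∨ n = ℓ := by
    intro n hn
    have : n ∈ G.neighborFinset v := (G.mem_neighborFinset v n).mpr hn
    rw [hNset] at this
    simpa using this
  -- the counting device
  have key : ∀ (M : List V), M.Nodup → k - 1 ≤ M.length → (∀ x ∈ M, G.degree x = 3) →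
      (∀ x ∈ M, ∃ (hx : x ≠ v),
        (G.induce {y : V | y ≠ v}).connectedComponentMk ⟨x, hx⟩ = C) →
      k - 1 ≤ (Finset.univ.filter fun w : {x : V // x ∈ {x : V | x ≠ v}} =>
          G.degree (w : V) = 3
            ∧ (G.induce {x : V | x ≠ v}).connectedComponentMk w = C).card := by
    intro M hnd hlen h3 hreC
    set S := (Finset.univ.filter fun w : {x : V // x ∈ {x : V | x ≠ v}} =>
        G.degree (w : V) = 3
          ∧ (G.induce {x : V | x ≠ v}).connectedComponentMk w = C) with hS
    have hf : ∀ i : Fin (k - 1), (M.get (Fin.castLE hlen i)) ∈ M := fun i => M.get_mem _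
    let f : Fin (k - 1) → {w // w ∈ S} := fun i =>
      ⟨⟨M.get (Fin.castLE hlen i), (hreC _ (hf i)).choose⟩, by
        rw [hS, Finset.mem_filter]
        exact ⟨Finset.mem_univ _, h3 _ (hf i), (hreC _ (hf i)).choose_spec⟩⟩
    have hinj : Function.Injective f := by
      intro i j hij
      have h1 : M.get (Fin.castLE hlen i) = M.get (Fin.castLE hlen j) := by
        have := congrArg (fun z => ((z : {w // w ∈ S}) : {x : V // x ∈ {x : V | x ≠ v}}).val) hij
        exact this
      have h2 := List.nodup_iff_injective_get.mp hnd h1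
      have := congrArg Fin.val h2
      exact Fin.ext this
    calc k - 1 = Fintype.card (Fin (k - 1)) := (Fintype.card_fin _).symm
      _ ≤ Fintype.card {w // w ∈ S} := Fintype.card_le_of_injective f hinj
      _ = S.card := Fintype.card_coe S
  -- classify the component C
  obtain ⟨x, hxC⟩ := C.exists_rep
  obtain ⟨xval, hxne⟩ := x
  have hxv : xval ≠ v := hxne
  have hreachvx : G.Reachable v xval := hT.isConnected.preconnected v xval
  obtain ⟨pw0⟩ := hreachvx
  set pwv := (pw0.toPath : G.Walk v xval) with hpwv
  have hpwp : pwv.IsPath := pw0.toPath.property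
  have hxtail : xval ∈ pwv.support.tail := by
    have h1 : xval ∈ pwv.support := pwv.end_mem_support
    rw [SimpleGraph.Walk.support_eq_cons] at h1
    rcases List.mem_cons.mp h1 with h | h
    · exact absurd h hxv
    · exact h
  have htailpw : pwv.support.tail ≠ [] := List.ne_nil_of_mem hxtail
  obtain ⟨n, hvn, hnmem, hnreach⟩ := side pwv hpwp htailpw
  obtain ⟨hxv', hnv, hrxn⟩ := hnreach xval hxtail
  have hCn : (G.induce {y : V | y ≠ v}).connectedComponentMk ⟨n, hnv⟩ = C := by
    rw [← hxC]
    exact (SimpleGraph.ConnectedComponent.sound hrxn).symm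
  rcases hnbr n hvn with rfl | rfl | rfl
  · -- n = a : use the early trivalent vertices
    refine key A hAnodup (le_of_eq hAlen.symm) hAdeg ?_
    intro x hx
    obtain ⟨hxvv, hav, hre⟩ := hareach x (hAmemtail x hx)
    exact ⟨hxvv, (SimpleGraph.ConnectedComponent.sound hre).trans hCn⟩
  · -- n = b : use the late trivalent vertices
    refine key B2 hB2nodup hB2len hB2deg ?_
    intro x hx
    obtain ⟨hxvv, hbv, hre⟩ := hbreach x (hB2tail x hx)
    exact ⟨hxvv, (SimpleGraph.ConnectedComponent.sound hre).trans hCn⟩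
  · -- n = ℓ : contradiction with the choice of C
    exact absurd hCn.symm hC
end
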